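/- (SOLS rule for sparse overlapping group lasso.) Consider min_β ½‖y − Xβ‖₂² + λ‖β‖₁ + λ Σ_{g∈G}√(n_g)‖β_g‖₂ viewed as an overlapping group lasso with the singleton groups {j} added to G. For a group g with |g| ≥ 2 and θ* = (y − Xβ*(λ₀))/λ₀, if √( Σ_{j∈g} (max(|x_jᵀθ*| − 1, 0))² ) < √(n_g) − ‖X_g‖_F‖y‖₂·(1/λ − 1/λ₀) with 0 < λ < λ₀, then β*_g(λ) = 0, where β*(λ) is any optimal solution at λ (with λ₁ = λ₂ = λ). -/

import Mathlib

/-- The sparse overlapping group lasso objective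
½‖y − Xβ‖² + λ‖β‖₁ + λ Σ_g √(n_g)‖β_g‖₂ (with λ₁ = λ₂ = λ). -/
noncomputable def sogLassoObj {N J : ℕ} (X : Matrix (Fin N) (Fin J) ℝ) (y : Fin N → ℝ)
    (G : Finset (Finset (Fin J))) (lam : ℝ) (β : Fin J → ℝ) : ℝ :=
  (1 / 2) * (∑ i, (y i - X.mulVec β i) ^ 2)
    + lam * (∑ j, |β j|)
    + lam * ∑ h ∈ G, Real.sqrt (h.card : ℝ) * Real.sqrt (∑ j ∈ h, β j ^ 2)

/-!
Write θ(λ) = (y − Xβ*(λ))/λ. Optimality of β*(λ) for the quadratic loss plus the convex penalty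
λΩ is the variational inequality ⟨y − Xβ*(λ), Xβ − Xβ*(λ)⟩ ≤ λ(Ω(β) − Ω(β*(λ))). Used at
λ and λ₀ with each optimum as the other's competitor, it gives
⟨θ(λ) − θ(λ₀), λθ(λ) − λ₀θ(λ₀)⟩ ≤ 0, which together with ‖θ(λ₀)‖ ≤ ‖y‖/λ₀ bounds
‖θ(λ) − θ(λ₀)‖ by ‖y‖(1/λ − 1/λ₀). Used with the competitor obtained by zeroing the block g, it
gives ‖β_g‖₁ + √n_g‖β_g‖ ≤ Σ_{j∈g} β_j x_jᵀθ(λ). Splitting x_jᵀθ(λ) = x_jᵀθ* + x_jᵀ(θ(λ) − θ*),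
the right side is at most ‖β_g‖₁ + ‖β_g‖(‖(|x_jᵀθ*| − 1)₊‖ + ‖X_g‖_F‖θ(λ) − θ*‖), and the
screening inequality makes the bracket smaller than √n_g, forcing β_g = 0.
-/

open Set Filter Topology
open scoped RealInnerProductSpace

theorem le_of_forall_le_add_mul {a b c : ℝ} (h : ∀ t ∈ Ioc (0 : ℝ) 1, a ≤ b + t * c) :
    a ≤ b := by
  have hlim : Tendsto (fun t : ℝ => b + t * c) (𝓝[>] 0) (𝓝 b) := by
    have : Tendsto (fun t : ℝ => b + t * c) (𝓝 0) (𝓝 (b + 0 * c)) :=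
      (continuous_const.add (continuous_id.mul continuous_const)).tendsto 0
    simpa using this.mono_left nhdsWithin_le_nhds
  exact ge_of_tendsto hlim (eventually_of_mem (Ioc_mem_nhdsGT one_pos) h)

theorem convexOn_finset_sum {ι E : Type*} [AddCommMonoid E] [Module ℝ E] {s : Set E}
    (hs : Convex ℝ s) (t : Finset ι) {f : ι → E → ℝ} (hf : ∀ i ∈ t, ConvexOn ℝ s (f i)) :
    ConvexOn ℝ s fun x => ∑ i ∈ t, f i x := by
  classical
  induction t using Finset.induction_on with
  | empty => simpa using convexOn_const (0 : ℝ) hs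
  | insert i t hi ih =>
    simp only [Finset.sum_insert hi]
    exact (hf i (Finset.mem_insert_self i t)).add
      (ih fun j hj => hf j (Finset.mem_insert_of_mem hj))

section LeastSquares

variable {V E : Type*} [AddCommGroup V] [Module ℝ V] [NormedAddCommGroup E]
  [InnerProductSpace ℝ E] {A : V →ₗ[ℝ] E} {y : E} {f : V → ℝ} {b : V}

theorem inner_residual_le_of_forall_le (hf : ConvexOn ℝ univ f)
    (hb : ∀ β, ‖y - A b‖ ^ 2 / 2 + f b ≤ ‖y - A β‖ ^ 2 / 2 + f β) (β : V) :
    ⟪y - A b, A β - A b⟫ ≤ f β - f b := by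
  set r := y - A b
  set v := A β - A b
  refine le_of_forall_le_add_mul (c := ‖v‖ ^ 2 / 2) fun t ⟨ht0, ht1⟩ => ?_
  have hres : y - A ((1 - t) • b + t • β) = r - t • v := by
    simp only [map_add, map_smul, r, v]; module
  have hconv : f ((1 - t) • b + t • β) ≤ (1 - t) * f b + t * f β :=
    hf.2 (mem_univ b) (mem_univ β) (by linarith) ht0.le (by ring)
  have hmin := hb ((1 - t) • b + t • β)
  rw [hres, norm_sub_sq_real r, norm_smul, real_inner_smul_right, Real.norm_eq_abs,
    abs_of_pos ht0] at hmin
  have : t * ⟪r, v⟫ ≤ t * (f β - f b + t * (‖v‖ ^ 2 / 2)) := by nlinarith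
  exact le_of_mul_le_mul_left this ht0

theorem norm_residual_le_of_forall_le
    (hb : ∀ β, ‖y - A b‖ ^ 2 / 2 + f b ≤ ‖y - A β‖ ^ 2 / 2 + f β) (h0 : f 0 ≤ f b) :
    ‖y - A b‖ ≤ ‖y‖ := by
  have := hb 0
  rw [map_zero, sub_zero] at this
  exact (pow_le_pow_iff_left₀ (norm_nonneg _) (norm_nonneg _) two_ne_zero).1 (by linarith)

theorem mul_norm_sub_le_of_inner_nonpos {θ θ0 : E} {lam lam0 : ℝ} (hll : lam ≤ lam0)
    (h : ⟪θ - θ0, lam • θ - lam0 • θ0⟫ ≤ 0) :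
    lam * ‖θ - θ0‖ ≤ (lam0 - lam) * ‖θ0‖ := by
  have hsplit : lam • θ - lam0 • θ0 = lam • (θ - θ0) - (lam0 - lam) • θ0 := by module
  rw [hsplit, inner_sub_right, real_inner_smul_right, real_inner_smul_right,
    real_inner_self_eq_norm_sq] at h
  have hcs : ⟪θ - θ0, θ0⟫ ≤ ‖θ - θ0‖ * ‖θ0‖ := real_inner_le_norm _ _
  have hmul : ‖θ - θ0‖ * (lam * ‖θ - θ0‖) ≤ ‖θ - θ0‖ * ((lam0 - lam) * ‖θ0‖) := by
    nlinarith [mul_le_mul_of_nonneg_left hcs (sub_nonneg.2 hll)]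
  rcases (norm_nonneg (θ - θ0)).eq_or_lt with hd | hd
  · rw [← hd, mul_zero]; exact mul_nonneg (sub_nonneg.2 hll) (norm_nonneg _)
  · exact le_of_mul_le_mul_left hmul hd

theorem norm_dual_sub_le {Ω : V → ℝ} (hΩ : ConvexOn ℝ univ Ω) (hΩ0 : ∀ β, Ω 0 ≤ Ω β)
    {lam lam0 : ℝ} (hlam : 0 < lam) (hll : lam ≤ lam0) {b0 : V}
    (hb : ∀ β, ‖y - A b‖ ^ 2 / 2 + lam * Ω b ≤ ‖y - A β‖ ^ 2 / 2 + lam * Ω β)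
    (hb0 : ∀ β, ‖y - A b0‖ ^ 2 / 2 + lam0 * Ω b0 ≤ ‖y - A β‖ ^ 2 / 2 + lam0 * Ω β) :
    ‖lam⁻¹ • (y - A b) - lam0⁻¹ • (y - A b0)‖ ≤ ‖y‖ * (lam⁻¹ - lam0⁻¹) := by
  have hlam0 : 0 < lam0 := hlam.trans_le hll
  have hvi := inner_residual_le_of_forall_le (f := fun β => lam * Ω β) (hΩ.smul hlam.le) hb b0
  have hvi0 :=
    inner_residual_le_of_forall_le (f := fun β => lam0 * Ω β) (hΩ.smul hlam0.le) hb0 b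
  have hmono : ⟪lam⁻¹ • (y - A b) - lam0⁻¹ • (y - A b0),
      lam • lam⁻¹ • (y - A b) - lam0 • lam0⁻¹ • (y - A b0)⟫ ≤ 0 := by
    rw [smul_inv_smul₀ hlam.ne', smul_inv_smul₀ hlam0.ne', sub_sub_sub_cancel_left,
      inner_sub_left, real_inner_smul_left, real_inner_smul_left]
    rw [← neg_sub (A b0) (A b), inner_neg_right] at hvi0
    have h1 : lam⁻¹ * ⟪y - A b, A b0 - A b⟫ ≤ Ω b0 - Ω b :=
      (inv_mul_le_iff₀ hlam).2 (by linarith)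
    have h2 : lam0⁻¹ * -⟪y - A b0, A b0 - A b⟫ ≤ Ω b - Ω b0 :=
      (inv_mul_le_iff₀ hlam0).2 (by linarith)
    linarith
  have hdual0 : ‖lam0⁻¹ • (y - A b0)‖ ≤ lam0⁻¹ * ‖y‖ := by
    rw [norm_smul, Real.norm_eq_abs, abs_of_pos (inv_pos.2 hlam0)]
    exact mul_le_mul_of_nonneg_left (norm_residual_le_of_forall_le (f := fun β => lam0 * Ω β)
      hb0 (mul_le_mul_of_nonneg_left (hΩ0 b0) hlam0.le)) (inv_nonneg.2 hlam0.le)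
  have hdiff := mul_norm_sub_le_of_inner_nonpos hll hmono
  rw [← le_div_iff₀' hlam] at hdiff
  calc _ ≤ (lam0 - lam) * ‖lam0⁻¹ • (y - A b0)‖ / lam := hdiff
    _ ≤ (lam0 - lam) * (lam0⁻¹ * ‖y‖) / lam := by gcongr
    _ = ‖y‖ * (lam⁻¹ - lam0⁻¹) := by field_simp

end LeastSquares

theorem sqrt_sum_sq_eq_norm {ι : Type*} (s : Finset ι) (f : ι → ℝ) :
    √(∑ j ∈ s, f j ^ 2) = ‖WithLp.toLp 2 fun j : s => f j‖ := by
  rw [EuclideanSpace.norm_eq, ← Finset.sum_coe_sort s]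
  simp

theorem sqrt_sum_sq_add_le {ι : Type*} (s : Finset ι) (f g : ι → ℝ) :
    √(∑ j ∈ s, (f j + g j) ^ 2) ≤ √(∑ j ∈ s, f j ^ 2) + √(∑ j ∈ s, g j ^ 2) := by
  simp only [sqrt_sum_sq_eq_norm]
  exact norm_add_le (WithLp.toLp 2 fun j : s => f j) (WithLp.toLp 2 fun j : s => g j)

theorem convexOn_sqrt_sum_sq {ι : Type*} (s : Finset ι) :
    ConvexOn ℝ univ fun β : ι → ℝ => √(∑ j ∈ s, β j ^ 2) := by
  have h := (convexOn_norm (E := EuclideanSpace ℝ s) convex_univ).comp_linearMap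
    ((WithLp.linearEquiv 2 ℝ (s → ℝ)).symm.toLinearMap ∘ₗ LinearMap.funLeft ℝ ℝ Subtype.val)
  simp only [sqrt_sum_sq_eq_norm]
  exact h

theorem sum_mul_add_le_sum_abs_add {ι : Type*} (s : Finset ι) (b a e : ι → ℝ) :
    ∑ j ∈ s, b j * (a j + e j) ≤ ∑ j ∈ s, |b j| + √(∑ j ∈ s, b j ^ 2) *
      (√(∑ j ∈ s, max (|a j| - 1) 0 ^ 2) + √(∑ j ∈ s, e j ^ 2)) := by
  set m := fun j => max (|a j| - 1) 0
  have hterm : ∀ j ∈ s, b j * (a j + e j) ≤ |b j| + |b j| * (m j + |e j|) := by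
    intro j _
    have hm : |a j| - 1 ≤ m j := le_max_left _ _
    calc b j * (a j + e j) ≤ |b j| * (|a j| + |e j|) :=
          (le_abs_self _).trans ((abs_mul _ _).trans_le
            (mul_le_mul_of_nonneg_left (abs_add_le _ _) (abs_nonneg _)))
      _ ≤ |b j| + |b j| * (m j + |e j|) := by nlinarith [abs_nonneg (b j)]
  have hcs := Real.sum_mul_le_sqrt_mul_sqrt s (fun j => |b j|) fun j => m j + |e j|
  have htri := sqrt_sum_sq_add_le s m fun j => |e j|
  simp only [sq_abs] at hcs htri
  calc ∑ j ∈ s, b j * (a j + e j) ≤ ∑ j ∈ s, (|b j| + |b j| * (m j + |e j|)) :=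
        Finset.sum_le_sum hterm
    _ ≤ _ := by
      rw [Finset.sum_add_distrib]
      gcongr
      exact hcs.trans (mul_le_mul_of_nonneg_left htri (Real.sqrt_nonneg _))

theorem sqrt_sum_sq_sum_mul_le {m n : Type*} [Fintype m] (X : Matrix m n ℝ) (s : Finset n)
    (u : m → ℝ) :
    √(∑ j ∈ s, (∑ i, X i j * u i) ^ 2) ≤ √(∑ j ∈ s, ∑ i, X i j ^ 2) * √(∑ i, u i ^ 2) := by
  rw [← Real.sqrt_mul (Finset.sum_nonneg fun j _ => Finset.sum_nonneg fun i _ => sq_nonneg _),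
    Finset.sum_mul]
  exact Real.sqrt_le_sqrt <| Finset.sum_le_sum fun j _ =>
    Finset.sum_mul_sq_le_sq_mul_sq _ _ _

noncomputable def sogPenalty {ι : Type*} [Fintype ι] (G : Finset (Finset ι)) (β : ι → ℝ) : ℝ :=
  ∑ j, |β j| + ∑ h ∈ G, √(h.card : ℝ) * √(∑ j ∈ h, β j ^ 2)

section Penalty

variable {ι : Type*} [Fintype ι] (G : Finset (Finset ι))

theorem convexOn_sogPenalty : ConvexOn ℝ univ (sogPenalty G) :=
  (convexOn_finset_sum convex_univ _ fun j _ =>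
      (convexOn_norm (E := ℝ) convex_univ).comp_linearMap
        (LinearMap.proj (R := ℝ) (φ := fun _ : ι => ℝ) j)).add
    (convexOn_finset_sum convex_univ G fun h _ =>
      (convexOn_sqrt_sum_sq h).smul (Real.sqrt_nonneg _))

theorem sogPenalty_zero_le (β : ι → ℝ) : sogPenalty G 0 ≤ sogPenalty G β := by
  have h0 : sogPenalty G 0 = 0 := by simp [sogPenalty]
  rw [h0, sogPenalty]
  positivity

variable {G} [DecidableEq ι]

theorem sogPenalty_ite_add_le {g : Finset ι} (hg : g ∈ G) (β : ι → ℝ) :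
    sogPenalty G (fun j => if j ∈ g then 0 else β j)
        + (∑ j ∈ g, |β j| + √(g.card : ℝ) * √(∑ j ∈ g, β j ^ 2)) ≤ sogPenalty G β := by
  set β' : ι → ℝ := fun j => if j ∈ g then 0 else β j
  have hl1 : ∑ j, |β' j| + ∑ j ∈ g, |β j| = ∑ j, |β j| := by
    rw [← Finset.univ_inter g, ← Finset.sum_ite_mem, ← Finset.sum_add_distrib]
    exact Finset.sum_congr rfl fun j _ => by by_cases hj : j ∈ g <;> simp [β', hj]
  have hmono : ∀ h : Finset ι, √(∑ j ∈ h, β' j ^ 2) ≤ √(∑ j ∈ h, β j ^ 2) := fun h =>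
    Real.sqrt_le_sqrt <| Finset.sum_le_sum fun j _ => by
      by_cases hj : j ∈ g <;> simp [β', hj, sq_nonneg]
  have hg0 : √(∑ j ∈ g, β' j ^ 2) = 0 := by simp +contextual [β']
  have hgroups := Finset.sum_le_sum fun h (_ : h ∈ G.erase g) =>
    mul_le_mul_of_nonneg_left (hmono h) (Real.sqrt_nonneg (h.card : ℝ))
  simp only [sogPenalty, ← Finset.add_sum_erase G _ hg, hg0, mul_zero, zero_add]
  linarith

end Penalty

noncomputable def Matrix.euclideanMulVec {m n : Type*} [Fintype n] (X : Matrix m n ℝ) :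
    (n → ℝ) →ₗ[ℝ] EuclideanSpace ℝ m :=
  (WithLp.linearEquiv 2 ℝ (m → ℝ)).symm.toLinearMap ∘ₗ X.mulVecLin

section SparseGroupLasso

variable {N J : ℕ} (X : Matrix (Fin N) (Fin J) ℝ) (y : Fin N → ℝ) (G : Finset (Finset (Fin J)))

theorem sogLassoObj_eq (lam : ℝ) (β : Fin J → ℝ) :
    sogLassoObj X y G lam β
      = ‖WithLp.toLp 2 y - X.euclideanMulVec β‖ ^ 2 / 2 + lam * sogPenalty G β := by
  rw [EuclideanSpace.norm_sq_eq]
  simp [sogLassoObj, sogPenalty, Matrix.euclideanMulVec]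
  ring

variable {X y G}

theorem sqrt_sum_sq_dual_sub_le {lam lam0 : ℝ} (hlam : 0 < lam) (hll : lam ≤ lam0)
    {b b0 : Fin J → ℝ} (hb : ∀ β, sogLassoObj X y G lam b ≤ sogLassoObj X y G lam β)
    (hb0 : ∀ β, sogLassoObj X y G lam0 b0 ≤ sogLassoObj X y G lam0 β) {θ θ0 : Fin N → ℝ}
    (hθ : ∀ i, θ i = (y i - X.mulVec b i) / lam) (hθ0 : ∀ i, θ0 i = (y i - X.mulVec b0 i) / lam0) :
    √(∑ i, (θ i - θ0 i) ^ 2) ≤ √(∑ i, y i ^ 2) * (1 / lam - 1 / lam0) := by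
  simp only [sogLassoObj_eq] at hb hb0
  simp only [hθ, hθ0]
  have := norm_dual_sub_le (convexOn_sogPenalty G) (sogPenalty_zero_le G) hlam hll hb hb0
  rw [EuclideanSpace.norm_eq, EuclideanSpace.norm_eq] at this
  simpa [Matrix.euclideanMulVec, div_eq_inv_mul] using this

theorem sum_abs_add_sqrt_card_mul_le {lam : ℝ} (hlam : 0 < lam) {g : Finset (Fin J)}
    (hg : g ∈ G) {b : Fin J → ℝ} (hb : ∀ β, sogLassoObj X y G lam b ≤ sogLassoObj X y G lam β)
    {θ : Fin N → ℝ} (hθ : ∀ i, θ i = (y i - X.mulVec b i) / lam) :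
    ∑ j ∈ g, |b j| + √(g.card : ℝ) * √(∑ j ∈ g, b j ^ 2) ≤ ∑ j ∈ g, b j * ∑ i, X i j * θ i := by
  set b' : Fin J → ℝ := fun j => if j ∈ g then 0 else b j
  have hdiff : ∀ i, X.mulVec b' i - X.mulVec b i = -∑ j ∈ g, X i j * b j := fun i => by
    rw [← Finset.sum_neg_distrib, ← Finset.univ_inter g, ← Finset.sum_ite_mem, Matrix.mulVec,
      Matrix.mulVec, dotProduct, dotProduct, ← Finset.sum_sub_distrib]
    exact Finset.sum_congr rfl fun j _ => by by_cases hj : j ∈ g <;> simp [b', hj]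
  have hres : ∀ i, y i - X.mulVec b i = lam * θ i := fun i => by
    rw [hθ, mul_div_cancel₀ _ hlam.ne']
  have hinner : ⟪WithLp.toLp 2 y - X.euclideanMulVec b, X.euclideanMulVec b' - X.euclideanMulVec b⟫
      = -(lam * ∑ j ∈ g, b j * ∑ i, X i j * θ i) := by
    change ∑ i, (X.mulVec b' i - X.mulVec b i) * (y i - X.mulVec b i) = _
    simp only [hdiff, hres, neg_mul, Finset.sum_neg_distrib, Finset.sum_mul, Finset.mul_sum]
    rw [Finset.sum_comm]
    exact congrArg Neg.neg <| Finset.sum_congr rfl fun j _ =>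
      Finset.sum_congr rfl fun i _ => by ring
  have hvi := inner_residual_le_of_forall_le (f := fun β => lam * sogPenalty G β)
    ((convexOn_sogPenalty G).smul hlam.le) (by simpa only [sogLassoObj_eq] using hb) b'
  have hpen := mul_le_mul_of_nonneg_left (sogPenalty_ite_add_le hg b) hlam.le
  rw [hinner] at hvi
  exact le_of_mul_le_mul_left (by linarith) hlam

end SparseGroupLasso

theorem sols_screening_general {N J : ℕ} (X : Matrix (Fin N) (Fin J) ℝ) (y : Fin N → ℝ)
    (lam lam0 : ℝ) (hlam : 0 < lam) (hll : lam < lam0)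
    (G : Finset (Finset (Fin J))) (g : Finset (Fin J)) (hg : g ∈ G)
    (β0 : Fin J → ℝ)
    (hopt0 : ∀ β : Fin J → ℝ, sogLassoObj X y G lam0 β0 ≤ sogLassoObj X y G lam0 β)
    (θstar : Fin N → ℝ) (hθ : ∀ i, θstar i = (y i - X.mulVec β0 i) / lam0)
    (hscreen : Real.sqrt (∑ j ∈ g, (max (|∑ i, X i j * θstar i| - 1) 0) ^ 2)
      < Real.sqrt (g.card : ℝ)
        - Real.sqrt (∑ j ∈ g, ∑ i, X i j ^ 2) * Real.sqrt (∑ i, y i ^ 2)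
          * (1 / lam - 1 / lam0)) :
    ∀ β1 : Fin J → ℝ,
      (∀ β : Fin J → ℝ, sogLassoObj X y G lam β1 ≤ sogLassoObj X y G lam β) →
      ∀ j ∈ g, β1 j = 0 := by
  intro β1 hopt1
  obtain ⟨θ, hθ1⟩ : ∃ θ : Fin N → ℝ, ∀ i, θ i = (y i - X.mulVec β1 i) / lam := ⟨_, fun i => rfl⟩
  have hdrift := sqrt_sum_sq_dual_sub_le hlam hll.le hopt1 hopt0 hθ1 hθ
  have hkkt := sum_abs_add_sqrt_card_mul_le hlam hg hopt1 hθ1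
  have hsplit : ∀ j, ∑ i, X i j * θ i = ∑ i, X i j * θstar i + ∑ i, X i j * (θ i - θstar i) :=
    fun j => by rw [← Finset.sum_add_distrib]; simp only [mul_sub, add_sub_cancel]
  simp only [hsplit] at hkkt
  have hbound := sum_mul_add_le_sum_abs_add g β1 (fun j => ∑ i, X i j * θstar i)
    fun j => ∑ i, X i j * (θ i - θstar i)
  have hfrob := sqrt_sum_sq_sum_mul_le X g (θ - θstar)
  simp only [Pi.sub_apply] at hfrob
  have hgap : √(∑ j ∈ g, max (|∑ i, X i j * θstar i| - 1) 0 ^ 2)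
      + √(∑ j ∈ g, (∑ i, X i j * (θ i - θstar i)) ^ 2) < √(g.card : ℝ) := by
    have := mul_le_mul_of_nonneg_left hdrift (Real.sqrt_nonneg (∑ j ∈ g, ∑ i, X i j ^ 2))
    linarith
  have hB : √(∑ j ∈ g, β1 j ^ 2) = 0 :=
    le_antisymm (by nlinarith [Real.sqrt_nonneg (∑ j ∈ g, β1 j ^ 2)]) (Real.sqrt_nonneg _)
  rw [Real.sqrt_eq_zero (Finset.sum_nonneg fun j _ => sq_nonneg _),
    Finset.sum_eq_zero_iff_of_nonneg fun j _ => sq_nonneg _] at hB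
  exact fun j hj => pow_eq_zero_iff two_ne_zero |>.1 (hB j hj)

/-- SOLS rule for sparse overlapping group lasso: the soft-thresholded screening
condition √(Σ_{j∈g} (max(|x_jᵀθ*| − 1, 0))²) < √(n_g) − ‖X_g‖_F‖y‖₂(1/λ − 1/λ₀)
implies β*_g(λ) = 0. -/
theorem sols_screening {N J : ℕ} (X : Matrix (Fin N) (Fin J) ℝ) (y : Fin N → ℝ)
    (lam lam0 : ℝ) (hlam : 0 < lam) (hll : lam < lam0)
    (G : Finset (Finset (Fin J))) (g : Finset (Fin J)) (hg : g ∈ G) (hcard : 2 ≤ g.card)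
    (β0 : Fin J → ℝ)
    (hopt0 : ∀ β : Fin J → ℝ, sogLassoObj X y G lam0 β0 ≤ sogLassoObj X y G lam0 β)
    (θstar : Fin N → ℝ) (hθ : ∀ i, θstar i = (y i - X.mulVec β0 i) / lam0)
    (hscreen : Real.sqrt (∑ j ∈ g, (max (|∑ i, X i j * θstar i| - 1) 0) ^ 2)
      < Real.sqrt (g.card : ℝ)
        - Real.sqrt (∑ j ∈ g, ∑ i, X i j ^ 2) * Real.sqrt (∑ i, y i ^ 2)
          * (1 / lam - 1 / lam0)) :
    ∀ β1 : Fin J → ℝ,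
      (∀ β : Fin J → ℝ, sogLassoObj X y G lam β1 ≤ sogLassoObj X y G lam β) →
      ∀ j ∈ g, β1 j = 0 :=
  sols_screening_general X y lam lam0 hlam hll G g hg β0 hopt0 θstar hθ hscreen
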